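/- Let X = {x_1,…,x_n}, Y = {y_1,…,y_n}, Z = {z_1,…,z_n} be three collections of positive integers and define 3n jobs with processing times p_i = x_i, p_{n+i} = y_i + Σ_{x∈X} x, p_{2n+i} = z_i + Σ_{y∈Y} y + Σ_{x∈X} x for i = 1,…,n. Then p_i < p_{n+j} < p_{2n+k} for all i, j, k ∈ {1,…,n}, and in every schedule of these 3n jobs on n identical machines (all of speed 1) that minimizes Σ_j C_j, each machine processes exactly three jobs: one job from {J_1,…,J_n} in first position, one job from {J_{n+1},…,J_{2n}} in second position, and one job from {J_{2n+1},…,J_{3n}} in third position. -/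

import Mathlib

/-- A schedule of a finite set of jobs `J` on `m` uniform machines: each job gets a
machine and a (1-based) position, positions on each machine are pairwise distinct and
the occupied positions on each machine are exactly `1, …, η_i`. -/
structure Schedule (J : Type) (m : ℕ) where
  mach : J → Fin m
  pos : J → ℕ
  pos_pos : ∀ j, 1 ≤ pos j
  inj : ∀ j j', mach j = mach j' → pos j = pos j' → j = j'
  contiguous : ∀ j, 2 ≤ pos j → ∃ j', mach j' = mach j ∧ pos j' = pos j - 1

namespace Schedule

variable {J : Type} {m : ℕ} [Fintype J]

/-- Number `η_i` of jobs scheduled on machine `i`. -/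
def load (σ : Schedule J m) (i : Fin m) : ℕ :=
  (Finset.univ.filter fun j => σ.mach j = i).card

/-- Completion time of job `j`: jobs on a machine of speed `V i` are processed
consecutively from time 0 without idle time. -/
noncomputable def compl (σ : Schedule J m) (p : J → ℝ) (V : Fin m → ℝ) (j : J) : ℝ :=
  (∑ j' ∈ Finset.univ.filter
      (fun j' => σ.mach j' = σ.mach j ∧ σ.pos j' ≤ σ.pos j), p j') / V (σ.mach j)

/-- Total completion time `Σ_j C_j` of a schedule. -/
noncomputable def totalC (σ : Schedule J m) (p : J → ℝ) (V : Fin m → ℝ) : ℝ :=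
  ∑ j, σ.compl p V j

/-- Positional weight of job `j`: `(η_i + 1 - k)/V_i` where `k` is the position of `j`
on its machine `M_i`, which holds `η_i` jobs. -/
noncomputable def pw (σ : Schedule J m) (V : Fin m → ℝ) (j : J) : ℝ :=
  ((σ.load (σ.mach j) : ℝ) + 1 - (σ.pos j : ℝ)) / V (σ.mach j)

end Schedule

/-- Processing times of the Numerical-3-Dimensional-Matching reduction: job `(0,i)` has
processing time `x_i`, job `(1,i)` has `y_i + Σ_x x`, and job `(2,i)` has
`z_i + Σ_y y + Σ_x x`. -/
noncomputable def procNDM (n : ℕ) (x y z : Fin n → ℕ) : Fin 3 × Fin n → ℝ := fun j =>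
  if j.1 = 0 then ((x j.2 : ℕ) : ℝ)
  else if j.1 = 1 then ((y j.2 + ∑ i, x i : ℕ) : ℝ)
  else ((z j.2 + ∑ i, y i + ∑ i, x i : ℕ) : ℝ)

/-! At unit speeds `Σ_j C_j = Σ_j w_j p_j`, where the weight `w_j` is the number of jobs
from `j` to the end of its machine. Exchanging two jobs shows that in an optimal schedule a
longer job never has a larger weight, and at most `n t` jobs have weight `≤ t`. Every `X`-job
is shorter than all `2n` other jobs and every `Y`-job shorter than all `n` `Z`-jobs, so
`X`-jobs have weight `≥ 3` and `Y`-jobs weight `≥ 2`. The schedule placing the three classes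
in layers attains these bounds exactly, so by optimality they are equalities; then no machine
holds more than three jobs, and `3n` jobs on `n` machines fill each one. -/

open Finset

theorem Finset.eq_Icc_one_card {S : Finset ℕ} (hpos : ∀ k ∈ S, 1 ≤ k)
    (hpred : ∀ k ∈ S, 2 ≤ k → k - 1 ∈ S) : S = Icc 1 #S := by
  have hIcc : ∀ k ∈ S, Icc 1 k ⊆ S := by
    intro k
    induction k with
    | zero => simp
    | succ k ih =>
      intro hk l hl
      rcases (mem_Icc.1 hl).2.eq_or_lt with rfl | hlt
      · exact hk
      · exact ih (hpred _ hk (by grind)) (by grind)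
  refine eq_of_subset_of_card_le (fun k hk => mem_Icc.2 ⟨hpos k hk, ?_⟩) (by simp)
  simpa using card_le_card (hIcc k hk)

theorem Fintype.sum_mul_comp_swap_sub {ι R : Type*} [Fintype ι] [DecidableEq ι] [CommRing R]
    (f g : ι → R) {a b : ι} (hab : a ≠ b) :
    ∑ i, f i * g (Equiv.swap a b i) - ∑ i, f i * g i = (f a - f b) * (g b - g a) := by
  rw [← sum_sub_distrib, ← Finset.sum_subset (subset_univ {a, b}), sum_pair hab]
  · simp only [Equiv.swap_apply_left, Equiv.swap_apply_right]
    ring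
  · intro i _ hi
    simp only [mem_insert, mem_singleton, not_or] at hi
    simp [Equiv.swap_apply_of_ne_of_ne hi.1 hi.2]

namespace Schedule

def permute {J : Type} {m : ℕ} (σ : Schedule J m) (e : Equiv.Perm J) : Schedule J m where
  mach := σ.mach ∘ e
  pos := σ.pos ∘ e
  pos_pos j := σ.pos_pos (e j)
  inj j j' hmach hpos := e.injective (σ.inj _ _ hmach hpos)
  contiguous j hj := by
    obtain ⟨j', hmach, hpos⟩ := σ.contiguous (e j) hj
    exact ⟨e.symm j', by simpa using hmach, by simpa using hpos⟩

variable {J : Type} {m : ℕ} [Fintype J] (σ : Schedule J m)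

def jobsOn (i : Fin m) : Finset J := {j | σ.mach j = i}

theorem pos_injOn (i : Fin m) : Set.InjOn σ.pos (σ.jobsOn i) := by
  intro a ha b hb hab
  simp only [jobsOn, coe_filter, mem_univ, true_and, Set.mem_ofPred_eq] at ha hb
  exact σ.inj a b (ha.trans hb.symm) hab

theorem image_pos_jobsOn (i : Fin m) : (σ.jobsOn i).image σ.pos = Icc 1 (σ.load i) := by
  have hcard : #((σ.jobsOn i).image σ.pos) = σ.load i := card_image_of_injOn (σ.pos_injOn i)
  rw [← hcard]
  refine eq_Icc_one_card (fun k hk => ?_) (fun k hk hk2 => ?_)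
  · obtain ⟨j, -, rfl⟩ := mem_image.1 hk
    exact σ.pos_pos j
  · obtain ⟨j, hj, rfl⟩ := mem_image.1 hk
    obtain ⟨j', hmach, hpos⟩ := σ.contiguous j hk2
    exact mem_image.2 ⟨j', by simpa [jobsOn, hmach] using hj, hpos⟩

theorem pos_le_load (j : J) : σ.pos j ≤ σ.load (σ.mach j) := by
  have : σ.pos j ∈ (σ.jobsOn (σ.mach j)).image σ.pos := mem_image_of_mem _ (by simp [jobsOn])
  rw [image_pos_jobsOn] at this
  exact (mem_Icc.1 this).2

theorem exists_pos_eq_one {i : Fin m} (h : 0 < σ.load i) : ∃ j, σ.mach j = i ∧ σ.pos j = 1 := by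
  have : 1 ∈ (σ.jobsOn i).image σ.pos := by
    rw [image_pos_jobsOn, mem_Icc]
    omega
  obtain ⟨j, hj, hpos⟩ := mem_image.1 this
  exact ⟨j, by simpa [jobsOn] using hj, hpos⟩

/-- The number of completion times to which `p j` contributes: the `ℕ`-valued `pw` at unit
speeds. -/
def weight (j : J) : ℕ := σ.load (σ.mach j) + 1 - σ.pos j

theorem weight_add_pos (j : J) : σ.weight j + σ.pos j = σ.load (σ.mach j) + 1 := by
  have := σ.pos_le_load j
  unfold weight
  omega

theorem one_le_weight (j : J) : 1 ≤ σ.weight j := by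
  have := σ.pos_le_load j
  unfold weight
  omega

theorem card_filter_pos_le (j : J) :
    #{j' | σ.mach j = σ.mach j' ∧ σ.pos j ≤ σ.pos j'} = σ.weight j := by
  have hfilter : ({j' | σ.mach j = σ.mach j' ∧ σ.pos j ≤ σ.pos j'} : Finset J)
      = (σ.jobsOn (σ.mach j)).filter (σ.pos j ≤ σ.pos ·) := by
    ext j'
    simp [jobsOn, eq_comm]
  rw [hfilter, ← card_image_of_injOn ((σ.pos_injOn _).mono (filter_subset _ _)),
    ← filter_image, image_pos_jobsOn, weight, ← Nat.card_Icc]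
  congr 1
  ext k
  have := σ.pos_pos j
  simp only [mem_filter, mem_Icc]
  omega

theorem totalC_eq_sum_weight_mul (p : J → ℝ) :
    σ.totalC p (fun _ => 1) = ∑ j, (σ.weight j : ℝ) * p j := by
  simp only [totalC, compl, div_one, sum_filter]
  rw [sum_comm]
  refine sum_congr rfl fun j _ => ?_
  rw [← sum_filter, sum_const, card_filter_pos_le, nsmul_eq_mul]

theorem load_permute (e : Equiv.Perm J) (i : Fin m) : (σ.permute e).load i = σ.load i := by
  refine card_equiv e fun j => ?_
  simp only [mem_filter, mem_univ, true_and]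
  rfl

theorem weight_permute (e : Equiv.Perm J) (j : J) : (σ.permute e).weight j = σ.weight (e j) := by
  unfold weight
  rw [load_permute]
  rfl

theorem card_filter_weight_le (t : ℕ) : #{j | σ.weight j ≤ t} ≤ m * t := by
  calc #{j | σ.weight j ≤ t} ≤ #((univ : Finset (Fin m)) ×ˢ Icc 1 t) := by
        refine card_le_card_of_injOn (fun j => (σ.mach j, σ.weight j)) (fun j hj => ?_)
          (fun j _ j' _ h => ?_)
        · simp only [coe_filter, mem_univ, true_and, Set.mem_ofPred_eq] at hj
          simpa using ⟨σ.one_le_weight j, hj⟩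
        · obtain ⟨hmach, hweight⟩ := Prod.mk.inj h
          have := σ.weight_add_pos j
          have := σ.weight_add_pos j'
          exact σ.inj j j' hmach (by rw [hmach] at *; omega)
    _ = m * t := by simp

theorem load_eq_of_weight_le {k : ℕ} (hcard : Fintype.card J = m * k)
    (hw : ∀ j, σ.weight j ≤ k) (i : Fin m) : σ.load i = k := by
  have hle : ∀ i ∈ univ, σ.load i ≤ k := by
    intro i _
    rcases Nat.eq_zero_or_pos (σ.load i) with h | h
    · omega
    · obtain ⟨j, rfl, hpos⟩ := σ.exists_pos_eq_one h
      have := σ.weight_add_pos j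
      have := hw j
      omega
  have hsum : ∑ i, σ.load i = ∑ _i : Fin m, k := by
    rw [sum_const, card_univ, Fintype.card_fin, smul_eq_mul, ← hcard, ← card_univ]
    exact (card_eq_sum_card_fiberwise fun j _ => mem_univ (σ.mach j)).symm
  exact (sum_eq_sum_iff_of_le hle).1 hsum i (mem_univ i)

def IsOptimal (p : J → ℝ) : Prop :=
  ∀ τ : Schedule J m, σ.totalC p (fun _ => 1) ≤ τ.totalC p (fun _ => 1)

variable {σ} {p : J → ℝ}

theorem IsOptimal.weight_le_of_lt (hσ : σ.IsOptimal p) {a b : J} (hab : p a < p b) :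
    σ.weight b ≤ σ.weight a := by
  classical
  have hne : a ≠ b := by rintro rfl; exact hab.false
  have hswap := hσ (σ.permute (Equiv.swap a b))
  rw [totalC_eq_sum_weight_mul, totalC_eq_sum_weight_mul] at hswap
  simp only [weight_permute] at hswap
  have hrelabel : ∑ j, (σ.weight (Equiv.swap a b j) : ℝ) * p j
      = ∑ j, (σ.weight j : ℝ) * p (Equiv.swap a b j) := by
    simpa using Equiv.sum_comp (Equiv.swap a b) fun j => (σ.weight j : ℝ) * p (Equiv.swap a b j)
  have key := Fintype.sum_mul_comp_swap_sub (fun j => (σ.weight j : ℝ)) p hne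
  have : (0 : ℝ) ≤ (σ.weight a - σ.weight b) * (p b - p a) := by linarith
  exact_mod_cast sub_nonneg.1 (nonneg_of_mul_nonneg_left this (sub_pos.2 hab))

theorem IsOptimal.lt_weight_of_le_card (hσ : σ.IsOptimal p) {a : J} {t : ℕ} {S : Finset J}
    (hS : m * t ≤ #S) (hp : ∀ b ∈ S, p a < p b) : t < σ.weight a := by
  classical
  by_contra! ha
  have ha_notMem : a ∉ S := fun h => (hp a h).false
  have hsub : insert a S ⊆ ({j | σ.weight j ≤ t} : Finset J) := by
    intro b hb
    rcases mem_insert.1 hb with rfl | hb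
    · simpa using ha
    · simpa using (hσ.weight_le_of_lt (hp b hb)).trans ha
  have := (card_le_card hsub).trans (σ.card_filter_weight_le t)
  rw [card_insert_of_notMem ha_notMem] at this
  omega

theorem IsOptimal.weight_eq_of_le (hσ : σ.IsOptimal p) (hp : ∀ j, 0 < p j) (τ : Schedule J m)
    (hle : ∀ j, τ.weight j ≤ σ.weight j) (j : J) : σ.weight j = τ.weight j := by
  have hmul : ∀ j ∈ univ, (τ.weight j : ℝ) * p j ≤ σ.weight j * p j := fun j _ =>
    mul_le_mul_of_nonneg_right (by exact_mod_cast hle j) (hp j).le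
  have hsum := hσ τ
  rw [totalC_eq_sum_weight_mul, totalC_eq_sum_weight_mul] at hsum
  have := (sum_eq_sum_iff_of_le hmul).1 (le_antisymm (sum_le_sum hmul) hsum) j (mem_univ j)
  exact_mod_cast (mul_right_cancel₀ (hp j).ne' this).symm

def stacked (k m : ℕ) : Schedule (Fin k × Fin m) m where
  mach j := j.2
  pos j := j.1 + 1
  pos_pos _ := Nat.le_add_left 1 _
  inj j j' hmach hpos := Prod.ext (Fin.ext (Nat.add_right_cancel hpos)) hmach
  contiguous j hj := ⟨(⟨j.1 - 1, by omega⟩, j.2), rfl, by simp only; omega⟩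

theorem stacked_load (k m : ℕ) (i : Fin m) : (stacked k m).load i = k := by
  have : ({j | (stacked k m).mach j = i} : Finset (Fin k × Fin m)) = univ ×ˢ {i} := by
    ext ⟨t, i'⟩
    simp only [mem_filter, mem_univ, true_and, mem_product, mem_singleton]
    exact Iff.rfl
  simp [load, this]

theorem stacked_weight (k m : ℕ) (j : Fin k × Fin m) : (stacked k m).weight j = k - j.1 := by
  simp only [weight, stacked_load]
  show k + 1 - (j.1 + 1) = k - j.1
  omega

end Schedule

theorem procNDM_pos (n : ℕ) (x y z : Fin n → ℕ)
    (hx : ∀ i, 0 < x i) (hy : ∀ i, 0 < y i) (hz : ∀ i, 0 < z i) (j : Fin 3 × Fin n) :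
    0 < procNDM n x y z j := by
  obtain ⟨t, i⟩ := j
  have := hx i
  have := hy i
  have := hz i
  fin_cases t <;> norm_num [procNDM] <;> norm_cast <;> omega

theorem procNDM_lt_of_fst_lt (n : ℕ) (x y z : Fin n → ℕ) (hy : ∀ i, 0 < y i) (hz : ∀ i, 0 < z i)
    {a b : Fin 3 × Fin n} (hab : a.1 < b.1) : procNDM n x y z a < procNDM n x y z b := by
  obtain ⟨s, i⟩ := a
  obtain ⟨t, k⟩ := b
  have hxi : x i ≤ ∑ i, x i := single_le_sum (fun _ _ => Nat.zero_le _) (mem_univ i)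
  have hyi : y i ≤ ∑ i, y i := single_le_sum (fun _ _ => Nat.zero_le _) (mem_univ i)
  have := hy k
  have := hz k
  fin_cases s <;> fin_cases t <;> norm_num at hab <;> norm_num [procNDM] <;> norm_cast <;> omega

theorem card_filter_lt_fst {k : ℕ} (n : ℕ) (t : Fin k) :
    #{b : Fin k × Fin n | t < b.1} = (k - 1 - t) * n := by
  have : ({b | t < b.1} : Finset (Fin k × Fin n)) = Ioi t ×ˢ univ := by
    ext b
    simp
  simp [this]

/-- For the Numerical-3-Dimensional-Matching jobs, `p_i < p_{n+j} <
p_{2n+k}` for all `i, j, k`, and in every schedule on `n` identical machines minimizing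
`Σ_j C_j`, each machine processes exactly three jobs: an `X`-job in first position, a
`Y`-job in second position and a `Z`-job in third position (job `(t,i)` is in
position `t+1`). -/
theorem optimal_NDM_schedule_structure
    (n : ℕ) (x y z : Fin n → ℕ)
    (hx : ∀ i, 0 < x i) (hy : ∀ i, 0 < y i) (hz : ∀ i, 0 < z i) :
    (∀ i j k : Fin n,
        procNDM n x y z (0, i) < procNDM n x y z (1, j) ∧
        procNDM n x y z (1, j) < procNDM n x y z (2, k)) ∧
    ∀ σ : Schedule (Fin 3 × Fin n) n,
      (∀ τ : Schedule (Fin 3 × Fin n) n,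
          σ.totalC (procNDM n x y z) (fun _ => 1)
            ≤ τ.totalC (procNDM n x y z) (fun _ => 1)) →
      (∀ i : Fin n, σ.load i = 3) ∧
      ∀ j : Fin 3 × Fin n, σ.pos j = (j.1 : ℕ) + 1 := by
  have hlt {a b : Fin 3 × Fin n} (hab : a.1 < b.1) := procNDM_lt_of_fst_lt n x y z hy hz hab
  refine ⟨fun i j k => ⟨hlt (by simp), hlt (by simp)⟩, fun σ (hσ : σ.IsOptimal _) => ?_⟩
  have hge (j : Fin 3 × Fin n) : (Schedule.stacked 3 n).weight j ≤ σ.weight j := by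
    have := hσ.lt_weight_of_le_card (t := 2 - j.1) (S := {b | j.1 < b.1})
      (by rw [card_filter_lt_fst, mul_comm]) fun b hb => hlt (mem_filter.1 hb).2
    rw [Schedule.stacked_weight]
    omega
  have hweight := hσ.weight_eq_of_le (procNDM_pos n x y z hx hy hz) _ hge
  have hload := σ.load_eq_of_weight_le (k := 3) (by simp [mul_comm])
    fun j => by rw [hweight, Schedule.stacked_weight]; omega
  refine ⟨hload, fun j => ?_⟩
  have := σ.weight_add_pos j
  rw [hweight, Schedule.stacked_weight, hload] at this
  omega
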